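/- In the Bad Match game, every Markov Max strategy σ is worthless: inf over Min strategies π of P_{d,σ,π}(Büchi({w,s})) equals 0. -/

import Mathlib

open scoped ENNReal Classical
open MeasureTheory

/-- A concurrent stochastic game: a set of states `S`, for each state a nonempty
countable set of Max actions and a nonempty finite set of Min actions, and for each
state and action pair a probability distribution on successor states. -/
structure ConcurrentGame (S A B : Type) where
  actA : S → Set A
  actB : S → Set B
  actA_nonempty : ∀ s, (actA s).Nonempty
  actA_countable : ∀ s, (actA s).Countable
  actB_nonempty : ∀ s, (actB s).Nonempty
  actB_finite : ∀ s, (actB s).Finite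
  trans : S → A → B → PMF S

namespace ConcurrentGame

/-- A history: the chronological list of (state, Max action, Min action) steps so far,
together with the current (final) state. -/
abbrev Hist (S A B : Type) : Type := List (S × A × B) × S

/-- A play: an infinite sequence of (state, Max action, Min action) triples. -/
abbrev Play (S A B : Type) : Type := ℕ → S × A × B

/-- Plays carry the product (cylinder) sigma-algebra, each (countable, discrete)
factor carrying the discrete sigma-algebra. -/
instance playMeasurableSpace (S A B : Type) : MeasurableSpace (Play S A B) :=
  @MeasurableSpace.pi ℕ (fun _ => S × A × B) (fun _ => ⊤)

/-- The cylinder sigma-algebra on infinite state sequences. -/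
def seqMS (S : Type) : MeasurableSpace (ℕ → S) :=
  @MeasurableSpace.pi ℕ (fun _ => S) (fun _ => ⊤)

variable {S A B : Type}

/-- A Max strategy: a mixed action (supported on the legal Max actions at the final
state) for every history. -/
structure MaxStrategy (G : ConcurrentGame S A B) where
  toFun : Hist S A B → PMF A
  mem_actA : ∀ h : Hist S A B, ∀ a ∈ (toFun h).support, a ∈ G.actA h.2

/-- A Min strategy: a mixed action (supported on the legal Min actions at the final
state) for every history. -/
structure MinStrategy (G : ConcurrentGame S A B) where
  toFun : Hist S A B → PMF B
  mem_actB : ∀ h : Hist S A B, ∀ b ∈ (toFun h).support, b ∈ G.actB h.2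

/-- The state at position `i` of a history with step list `l` and final state `s`. -/
def stateAt (l : List (S × A × B)) (s : S) (i : ℕ) : S :=
  match l[i]? with
  | some x => x.1
  | none => s

/-- The first state of the step list `l`, or `s` if `l` is empty. -/
def headState (l : List (S × A × B)) (s : S) : S :=
  match l with
  | [] => s
  | x :: _ => x.1

/-- Shift a function on histories by prepending a fixed first step. -/
def shiftF {α : Type} (f : Hist S A B → α) (x : S × A × B) : Hist S A B → α :=
  fun h => f (x :: h.1, h.2)

/-- The probability that the play from `s0` under the given (raw) strategies follows
exactly the history with step list `l` and final state `s`. -/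
noncomputable def histProb (G : ConcurrentGame S A B) :
    (Hist S A B → PMF A) → (Hist S A B → PMF B) → S → List (S × A × B) → S → ℝ≥0∞
  | _, _, s0, [], s => if s = s0 then 1 else 0
  | f, g, s0, (s', a, b) :: l, s =>
    if s' = s0 then
      f ([], s0) a * g ([], s0) b * G.trans s0 a b (headState l s) *
        histProb G (shiftF f (s0, a, b)) (shiftF g (s0, a, b)) (headState l s) l s
    else 0

/-- The cylinder set of plays extending the history `(l, s)`. -/
def cylinder (l : List (S × A × B)) (s : S) : Set (Play S A B) :=
  {ω | (∀ i : Fin l.length, ω i = l.get i) ∧ (ω l.length).1 = s}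

/-- `P` is the probability measure on plays induced by the initial state `s0` and the
strategies `σ` and `π` (characterized by its values on all cylinder sets; by the
Ionescu–Tulcea theorem such a measure exists and is unique on the cylinder
sigma-algebra). -/
def Consistent (G : ConcurrentGame S A B) (s0 : S) (σ : G.MaxStrategy)
    (π : G.MinStrategy) (P : Measure (Play S A B)) : Prop :=
  IsProbabilityMeasure P ∧
    ∀ (l : List (S × A × B)) (s : S), P (cylinder l s) = G.histProb σ.toFun π.toFun s0 l s

/-- The value of state `s0` for objective `E`:
`sup` over Max strategies of `inf` over Min strategies of the probability of `E`. -/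
noncomputable def val (G : ConcurrentGame S A B) (E : Set (Play S A B)) (s0 : S) : ℝ≥0∞ :=
  ⨆ σ : G.MaxStrategy, ⨅ π : G.MinStrategy,
    ⨅ P : {P : Measure (Play S A B) // Consistent G s0 σ π P}, P.1 E

/-- The Büchi objective: visit the target set `T` infinitely often. -/
def buchi {S A B : Type} (T : Set S) : Set (Play S A B) :=
  {ω | ∀ n : ℕ, ∃ m, n ≤ m ∧ (ω m).1 ∈ T}

/-- The transience objective: every state occurs only finitely often. -/
def transient {S A B : Type} : Set (Play S A B) :=
  {ω | ∀ s : S, {n : ℕ | (ω n).1 = s}.Finite}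

/-- The reachability objective: visit `T` at least once. -/
def reach {S A B : Type} (T : Set S) : Set (Play S A B) :=
  {ω | ∃ n : ℕ, (ω n).1 ∈ T}

/-- Reach the state `t` while staying inside `L` before the visit. -/
def reachVia {S A B : Type} (L : Set S) (t : S) : Set (Play S A B) :=
  {ω | ∃ n : ℕ, (ω n).1 = t ∧ ∀ i < n, (ω i).1 ∈ L}

/-- A strategy based on a memory set `M`: a map choosing a mixed action from
(mode, state), and a (possibly randomized) memory update map. -/
structure MemoryStrategy (G : ConcurrentGame S A B) (M : Type) where
  act : M → S → PMF A
  upd : S → M → A → B → S → PMF M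
  act_mem : ∀ m s, ∀ a ∈ (act m s).support, a ∈ G.actA s

variable {M : Type}

/-- The probability that the play from `s0` follows exactly the history with step
list `l` and final state `s`, when Max plays the memory-based strategy `(act, upd)`
with current (private, possibly randomized) memory mode `m` and Min plays the raw
strategy `g`. The sum ranges over the possible next memory modes. -/
noncomputable def histProbMem (G : ConcurrentGame S A B) (act : M → S → PMF A)
    (upd : S → M → A → B → S → PMF M) :
    (Hist S A B → PMF B) → M → S → List (S × A × B) → S → ℝ≥0∞
  | _, _, s0, [], s => if s = s0 then 1 else 0
  | g, m, s0, (s', a, b) :: l, s =>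
    if s' = s0 then
      act m s0 a * g ([], s0) b * G.trans s0 a b (headState l s) *
        ∑' m' : M, upd s0 m a b (headState l s) m' *
          histProbMem G act upd (shiftF g (s0, a, b)) m' (headState l s) l s
    else 0

/-- `P` is the probability measure on plays induced by the initial state `s0`, the
memory-based Max strategy `τ` with initial mode `m0`, and the Min strategy `π`
(characterized by its values on all cylinder sets). -/
def ConsistentMem (G : ConcurrentGame S A B) (s0 : S) (τ : MemoryStrategy G M)
    (m0 : M) (π : G.MinStrategy) (P : Measure (Play S A B)) : Prop :=
  IsProbabilityMeasure P ∧
    ∀ (l : List (S × A × B)) (s : S),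
      P (cylinder l s) = histProbMem G τ.act τ.upd π.toFun m0 s0 l s

/-- All memory updates are Dirac (deterministic). -/
def MemoryStrategy.DiracUpdates {G : ConcurrentGame S A B} (τ : MemoryStrategy G M) : Prop :=
  ∀ s m a b s', ∃ m', τ.upd s m a b s' = PMF.pure m'

/-- All chosen mixed actions are Dirac, i.e. the strategy is deterministic. -/
def MemoryStrategy.Deterministic {G : ConcurrentGame S A B} (τ : MemoryStrategy G M) : Prop :=
  ∀ m s, ∃ a, τ.act m s = PMF.pure a

/-- For memory of the form `ℕ × F`: the first component is a step counter,
deterministically incremented by 1 at every step. -/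
def MemoryStrategy.StepCounter {G : ConcurrentGame S A B} {F : Type}
    (τ : MemoryStrategy G (ℕ × F)) : Prop :=
  ∀ s m a b s', ∀ m' ∈ (τ.upd s m a b s').support, m'.1 = m.1 + 1

/-- A deterministic strategy: every chosen mixed action is Dirac. -/
def MaxStrategy.Deterministic {G : ConcurrentGame S A B} (σ : G.MaxStrategy) : Prop :=
  ∀ h, ∃ a, σ.toFun h = PMF.pure a

/-- A memoryless strategy: the chosen mixed action depends only on the current state. -/
def MaxStrategy.Memoryless {G : ConcurrentGame S A B} (σ : G.MaxStrategy) : Prop :=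
  ∀ h h' : Hist S A B, h.2 = h'.2 → σ.toFun h = σ.toFun h'

/-- A Markov strategy: the chosen mixed action depends only on the current state and
the number of elapsed steps. -/
def MaxStrategy.IsMarkov {G : ConcurrentGame S A B} (σ : G.MaxStrategy) : Prop :=
  ∀ h h' : Hist S A B, h.1.length = h'.1.length → h.2 = h'.2 → σ.toFun h = σ.toFun h'

/-- Turn-based: in every state, the transition distribution depends on only one
player's action. -/
def TurnBased (G : ConcurrentGame S A B) : Prop :=
  ∀ s : S,
    (∀ a ∈ G.actA s, ∀ a' ∈ G.actA s, ∀ b ∈ G.actB s, G.trans s a b = G.trans s a' b) ∨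
    (∀ a ∈ G.actA s, ∀ b ∈ G.actB s, ∀ b' ∈ G.actB s, G.trans s a b = G.trans s a b')

/-- Acyclic: no play can visit any state more than once, i.e. there is no cycle of
legal transitions. -/
def Acyclic (G : ConcurrentGame S A B) : Prop :=
  ∀ (n : ℕ) (f : ℕ → S) (a : ℕ → A) (b : ℕ → B),
    (∀ i ≤ n, a i ∈ G.actA (f i) ∧ b i ∈ G.actB (f i) ∧
      f (i + 1) ∈ (G.trans (f i) (a i) (b i)).support) →
    f (n + 1) ≠ f 0

end ConcurrentGame

namespace ConcurrentGame

/-- The states of the Bad Match game. -/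
inductive BMState : Type
  | d | w | l | s | t
deriving DecidableEq

/-- The Bad Match game: actions `{0,1}` (as `false`/`true`) for both players at `d`;
the action pairs at `d` give `(1,1) ↦ w`, `(1,0) ↦ l`, `(0,1) ↦ t`, `(0,0) ↦ s`;
`w` and `l` are sinks; `s` and `t` return to `d`. -/
noncomputable def badMatch : ConcurrentGame BMState Bool Bool where
  actA := fun _ => Set.univ
  actB := fun _ => Set.univ
  actA_nonempty := fun _ => Set.univ_nonempty
  actA_countable := fun _ => Set.countable_univ
  actB_nonempty := fun _ => Set.univ_nonempty
  actB_finite := fun _ => Set.finite_univ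
  trans := fun st a b =>
    match st, a, b with
    | .d, true, true => PMF.pure .w
    | .d, true, false => PMF.pure .l
    | .d, false, true => PMF.pure .t
    | .d, false, false => PMF.pure .s
    | .w, _, _ => PMF.pure .w
    | .l, _, _ => PMF.pure .l
    | .s, _, _ => PMF.pure .d
    | .t, _, _ => PMF.pure .d

/-- The states of the Simplified Bad Match game (the state `w` is removed). -/
inductive SBMState : Type
  | d | l | s | t
deriving DecidableEq

/-- The Simplified Bad Match game: like the Bad Match, but the action pair `(1,1)`
at `d` leads to `s` instead of the removed state `w`. -/
noncomputable def simplifiedBadMatch : ConcurrentGame SBMState Bool Bool where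
  actA := fun _ => Set.univ
  actB := fun _ => Set.univ
  actA_nonempty := fun _ => Set.univ_nonempty
  actA_countable := fun _ => Set.countable_univ
  actB_nonempty := fun _ => Set.univ_nonempty
  actB_finite := fun _ => Set.finite_univ
  trans := fun st a b =>
    match st, a, b with
    | .d, true, true => PMF.pure .s
    | .d, true, false => PMF.pure .l
    | .d, false, true => PMF.pure .t
    | .d, false, false => PMF.pure .s
    | .l, _, _ => PMF.pure .l
    | .s, _, _ => PMF.pure .d
    | .t, _, _ => PMF.pure .d

end ConcurrentGame

/-!
Let `q k` be the probability that the Markov strategy `σ` plays `1` in `d` at time `2 k` (the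
state `d` is only visited at even times). Against the Min strategy that plays `0` before time
`2 N` and `1` afterwards, a play visiting `{w, s}` infinitely often must play `0` in `d` at the
times `0, 2, …, 2 N - 2` (otherwise it falls into `l`), and must play `1` in `d` at some time
`2 k ≥ 2 N` (after time `2 N` the target can only be visited through `w`). Its probability is
therefore at most `min (∏ k < N, (1 - q k)) (∑ k ≥ N, q k)`, and one of the two bounds tends
to `0`: the tail if `∑ q k < ∞`, the product otherwise.

The measure on plays required by `Consistent` is realised for any pair of Markov strategies in a
game with deterministic transitions: it is the image of the product measure of independent action
pairs `ω (n, s)`, one for every time `n` and state `s`, under the map sending `ω` to the play that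
uses `ω (n, s)` whenever it is in state `s` at time `n`. Cylinders of plays pull back to boxes.
-/

theorem PMF.apply_false_eq_one_sub (p : PMF Bool) : p false = 1 - p true := by
  have h := p.tsum_coe
  rw [tsum_fintype, Fintype.sum_bool] at h
  exact ENNReal.eq_sub_of_add_eq (p.apply_ne_top true) ((add_comm _ _).trans h)

theorem MeasureTheory.Measure.infinitePi_inter_pi {ι : Type*} {X : ι → Type*}
    [∀ i, MeasurableSpace (X i)] (μ : ∀ i, Measure (X i)) [∀ i, IsProbabilityMeasure (μ i)]
    {I : Finset ι} {j : ι} (hj : j ∉ I) {u : Set (X j)} {t : ∀ i, Set (X i)}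
    (hu : MeasurableSet u) (ht : ∀ i ∈ I, MeasurableSet (t i)) :
    Measure.infinitePi μ ({ω | ω j ∈ u} ∩ (I : Set ι).pi t) =
      μ j u * Measure.infinitePi μ ((I : Set ι).pi t) := by
  have hset : {ω : ∀ i, X i | ω j ∈ u} ∩ (I : Set ι).pi t =
      ((insert j I : Finset ι) : Set ι).pi (Function.update t j u) := by
    rw [Finset.coe_insert, Set.insert_pi, Function.update_self]
    exact congrArg _ (Set.pi_congr rfl fun i hi =>
      (Function.update_of_ne (ne_of_mem_of_not_mem hi hj) _ _).symm)
  have hmeas : ∀ i ∈ insert j I, MeasurableSet (Function.update t j u i) := by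
    intro i hi
    rcases eq_or_ne i j with rfl | hij
    · rwa [Function.update_self]
    · rw [Function.update_of_ne hij]
      exact ht i ((Finset.mem_insert.1 hi).resolve_left hij)
  rw [hset, Measure.infinitePi_pi μ hmeas, Measure.infinitePi_pi μ ht, Finset.prod_insert hj,
    Function.update_self]
  congr 1
  refine Finset.prod_congr rfl fun i hi => ?_
  rw [Function.update_of_ne (ne_of_mem_of_not_mem hi hj)]

namespace ENNReal

open Filter Topology

theorem prod_one_sub_mul_sum_le_one {q : ℕ → ℝ≥0∞} (hq : ∀ k, q k ≤ 1) (N : ℕ) :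
    (∏ k ∈ Finset.range N, (1 - q k)) * ∑ k ∈ Finset.range N, q k ≤ 1 := by
  induction N with
  | zero => simp
  | succ N ih =>
    set P := ∏ k ∈ Finset.range N, (1 - q k)
    have hP : P * (1 - q N) ≤ 1 := by
      refine mul_le_one' ?_ tsub_le_self
      exact Finset.prod_le_one' fun k _ => tsub_le_self
    rw [Finset.prod_range_succ, Finset.sum_range_succ]
    calc P * (1 - q N) * (∑ k ∈ Finset.range N, q k + q N)
        = (1 - q N) * (P * ∑ k ∈ Finset.range N, q k) + P * (1 - q N) * q N := by ring
      _ ≤ (1 - q N) * 1 + 1 * q N := by gcongr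
      _ = 1 := by rw [mul_one, one_mul, tsub_add_cancel_of_le (hq N)]

theorem tendsto_prod_one_sub_of_tsum_eq_top {q : ℕ → ℝ≥0∞} (hq : ∀ k, q k ≤ 1)
    (hsum : ∑' k, q k = ∞) :
    Tendsto (fun N => ∏ k ∈ Finset.range N, (1 - q k)) atTop (𝓝 0) := by
  have hinv : Tendsto (fun N => (∑ k ∈ Finset.range N, q k)⁻¹) atTop (𝓝 0) := by
    simpa [hsum] using (ENNReal.tendsto_nat_tsum q).inv
  refine tendsto_of_tendsto_of_tendsto_of_le_of_le tendsto_const_nhds hinv (fun _ => zero_le)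
    fun N => ?_
  exact ENNReal.le_inv_iff_mul_le.2 (prod_one_sub_mul_sum_le_one hq N)

theorem iInf_min_prod_one_sub_tsum_add_eq_zero {q : ℕ → ℝ≥0∞} (hq : ∀ k, q k ≤ 1) :
    ⨅ N, min (∏ k ∈ Finset.range N, (1 - q k)) (∑' k, q (k + N)) = 0 := by
  refine nonpos_iff_eq_zero.1 ?_
  by_cases hsum : ∑' k, q k = ∞
  · exact ge_of_tendsto' (tendsto_prod_one_sub_of_tsum_eq_top hq hsum)
      fun N => iInf_le_of_le N (min_le_left _ _)
  · exact ge_of_tendsto' (ENNReal.tendsto_sum_nat_add q hsum)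
      fun N => iInf_le_of_le N (min_le_right _ _)

end ENNReal

namespace ConcurrentGame

variable {S A B : Type}

section Cylinders

theorem measurableSet_setOf_apply_mem (m : ℕ) (U : Set (S × A × B)) :
    MeasurableSet {ω : Play S A B | ω m ∈ U} :=
  @measurable_pi_apply ℕ (fun _ => S × A × B) (fun _ => ⊤) m U trivial

theorem measurableSet_cylinder (l : List (S × A × B)) (s : S) :
    MeasurableSet (cylinder l s) := by
  have : cylinder l s =
      (⋂ i : Fin l.length, {ω : Play S A B | ω i ∈ ({l.get i} : Set (S × A × B))}) ∩
        {ω | ω l.length ∈ {x | x.1 = s}} := by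
    ext ω; simp [cylinder]
  rw [this]
  exact (MeasurableSet.iInter fun i => measurableSet_setOf_apply_mem _ _).inter
    (measurableSet_setOf_apply_mem _ _)

theorem measurableSet_buchi (T : Set S) : MeasurableSet (buchi T : Set (Play S A B)) := by
  have : (buchi T : Set (Play S A B)) =
      ⋂ n, ⋃ m, ⋃ _ : n ≤ m, {ω : Play S A B | ω m ∈ {x | x.1 ∈ T}} := by
    ext ω; simp [buchi]
  rw [this]
  exact .iInter fun n => .iUnion fun m => .iUnion fun _ => measurableSet_setOf_apply_mem _ _

theorem mem_cylinder_cons {ω : Play S A B} {x : S × A × B} {l : List (S × A × B)} {s : S} :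
    ω ∈ cylinder (x :: l) s ↔ ω 0 = x ∧ (fun k => ω (k + 1)) ∈ cylinder l s := by
  simp only [cylinder, Set.mem_ofPred_eq, List.length_cons, Fin.forall_fin_succ,
    Fin.val_zero, List.get_eq_getElem, List.getElem_cons_zero, Fin.val_succ,
    List.getElem_cons_succ]
  tauto

end Cylinders

section Markov

def markovFun {α : Type} (F : ℕ → S → PMF α) (n : ℕ) : Hist S A B → PMF α :=
  fun h => F (n + h.1.length) h.2

theorem shiftF_markovFun {α : Type} (F : ℕ → S → PMF α) (n : ℕ) (x : S × A × B) :
    shiftF (markovFun F n) x = markovFun F (n + 1) := by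
  funext h
  simp only [shiftF, markovFun, List.length_cons]
  rw [Nat.add_right_comm, Nat.add_assoc]

theorem MaxStrategy.IsMarkov.toFun_eq {G : ConcurrentGame S A B} {σ : G.MaxStrategy}
    (hσ : σ.IsMarkov) (x : S × A × B) :
    σ.toFun = markovFun (fun n s => σ.toFun (List.replicate n x, s)) 0 := by
  funext h
  exact hσ _ _ (by simp) rfl

end Markov

section HistProb

variable (G : ConcurrentGame S A B)

theorem histProb_eq_zero_of_headState_ne (f : Hist S A B → PMF A) (g : Hist S A B → PMF B)
    {s0 s : S} {l : List (S × A × B)} (h : headState l s ≠ s0) :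
    G.histProb f g s0 l s = 0 := by
  cases l with
  | nil => exact if_neg h
  | cons x l => exact if_neg h

theorem histProb_cons_of_trans_eq_pure {next : S → A → B → S}
    (hG : ∀ s a b, G.trans s a b = PMF.pure (next s a b))
    (f : Hist S A B → PMF A) (g : Hist S A B → PMF B) (s0 s s' : S) (a : A) (b : B)
    (l : List (S × A × B)) :
    G.histProb f g s0 ((s', a, b) :: l) s =
      if s' = s0 then
        f ([], s0) a * g ([], s0) b *
          G.histProb (shiftF f (s0, a, b)) (shiftF g (s0, a, b)) (next s0 a b) l s
      else 0 := by
  rw [histProb, hG]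
  split_ifs with h
  · by_cases hl : headState l s = next s0 a b
    · rw [hl, PMF.pure_apply_self, mul_one]
    · rw [PMF.pure_apply_of_ne _ _ hl, histProb_eq_zero_of_headState_ne G _ _ hl, mul_zero,
        zero_mul]
  · rfl

end HistProb

section DrivenPlay

variable (next : S → A → B → S)

/-- The state after `k` steps of the deterministic game `next` started in `s` at time `n`, when
`ω (m, s')` is the action pair played in state `s'` at time `m`. -/
def drivenState (ω : ℕ × S → A × B) : ℕ → S → ℕ → S
  | _, s, 0 => s
  | n, s, k + 1 => drivenState ω (n + 1) (next s (ω (n, s)).1 (ω (n, s)).2) k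

def drivenPlay (ω : ℕ × S → A × B) (n : ℕ) (s : S) : Play S A B :=
  fun k => (drivenState next ω n s k, ω (n + k, drivenState next ω n s k))

variable {next}

theorem drivenPlay_zero (ω : ℕ × S → A × B) (n : ℕ) (s : S) :
    drivenPlay next ω n s 0 = (s, ω (n, s)) := rfl

theorem drivenPlay_succ (ω : ℕ × S → A × B) (n : ℕ) (s : S) :
    (fun k => drivenPlay next ω n s (k + 1)) =
      drivenPlay next ω (n + 1) (next s (ω (n, s)).1 (ω (n, s)).2) := by
  funext k
  simp only [drivenPlay, drivenState, Nat.add_assoc, Nat.add_comm 1 k]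

theorem drivenPlay_succ_fst (ω : ℕ × S → A × B) (n : ℕ) (s : S) (k : ℕ) :
    (drivenPlay next ω n s (k + 1)).1 =
      next (drivenPlay next ω n s k).1 (drivenPlay next ω n s k).2.1
        (drivenPlay next ω n s k).2.2 := by
  induction k generalizing n s with
  | zero => rfl
  | succ k ih =>
    have h := congrFun (drivenPlay_succ (next := next) ω n s)
    rw [h (k + 1), h k, ih]

theorem drivenPlay_mem_cylinder_cons {ω : ℕ × S → A × B} {n : ℕ} {s0 s s' : S} {a : A}
    {b : B} {l : List (S × A × B)} :
    drivenPlay next ω n s0 ∈ cylinder ((s', a, b) :: l) s ↔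
      s' = s0 ∧ ω (n, s0) = (a, b) ∧
        drivenPlay next ω (n + 1) (next s0 a b) ∈ cylinder l s := by
  rw [mem_cylinder_cons, drivenPlay_zero, drivenPlay_succ]
  constructor
  · rintro ⟨h0, h⟩
    obtain ⟨rfl, hab⟩ := Prod.mk.inj h0
    rw [hab] at h
    exact ⟨rfl, hab, h⟩
  · rintro ⟨rfl, h0, h⟩
    rw [h0]
    exact ⟨rfl, h⟩

theorem exists_pi_eq_drivenPlay_preimage_cylinder (l : List (S × A × B)) (s : S) :
    ∀ (n : ℕ) (s0 : S), ∃ (I : Finset (ℕ × S)) (t : ℕ × S → Set (A × B)),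
      (∀ i ∈ I, n ≤ i.1) ∧
        {ω | drivenPlay next ω n s0 ∈ cylinder l s} = (I : Set (ℕ × S)).pi t := by
  induction l with
  | nil =>
    intro n s0
    refine ⟨{(n, s0)}, fun _ => {_x | s0 = s}, by simp, ?_⟩
    ext ω
    simp [cylinder, drivenPlay, drivenState]
  | cons x l ih =>
    obtain ⟨s', a, b⟩ := x
    intro n s0
    by_cases hs : s' = s0
    · obtain ⟨I, t, hI, hIt⟩ := ih (n + 1) (next s0 a b)
      have hnI : (n, s0) ∉ I := fun h => by have := hI _ h; omega
      refine ⟨insert (n, s0) I, Function.update t (n, s0) {(a, b)}, ?_, ?_⟩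
      · simp only [Finset.mem_insert, forall_eq_or_imp, le_refl, true_and]
        exact fun i hi => (hI i hi).trans' (Nat.le_succ n)
      · ext ω
        have hIt' := Set.ext_iff.1 hIt ω
        simp only [Set.mem_ofPred_eq] at hIt'
        simp only [Set.mem_ofPred_eq, drivenPlay_mem_cylinder_cons, hs, true_and,
          Finset.coe_insert, Set.mem_pi, Set.forall_mem_insert, Function.update_self,
          Set.mem_singleton_iff, hIt', Finset.mem_coe]
        refine and_congr_right fun _ => forall₂_congr fun i hi => ?_
        rw [Function.update_of_ne (ne_of_mem_of_not_mem hi hnI)]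
    · refine ⟨{(n, s0)}, fun _ => ∅, by simp, ?_⟩
      ext ω
      simp [drivenPlay_mem_cylinder_cons, hs]

end DrivenPlay

section MarkovMeasure

variable [Countable A] [Countable B] [MeasurableSpace A] [MeasurableSingletonClass A]
  [MeasurableSpace B] [MeasurableSingletonClass B]

noncomputable def actionLaw (F : ℕ → S → PMF A) (H : ℕ → S → PMF B) :
    Measure (ℕ × S → A × B) :=
  Measure.infinitePi fun i => (F i.1 i.2).toMeasure.prod (H i.1 i.2).toMeasure

instance (F : ℕ → S → PMF A) (H : ℕ → S → PMF B) :
    IsProbabilityMeasure (actionLaw F H) := by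
  unfold actionLaw; infer_instance

omit [Countable A] [MeasurableSingletonClass A] in
theorem ae_actionLaw_snd_mem_support [Countable S] (F : ℕ → S → PMF A)
    (H : ℕ → S → PMF B) :
    ∀ᵐ ω ∂actionLaw F H, ∀ i, (ω i).2 ∈ (H i.1 i.2).support := by
  refine ae_all_iff.2 fun i => ?_
  set μ := fun i : ℕ × S => (F i.1 i.2).toMeasure.prod (H i.1 i.2).toMeasure
  have hi : ∀ᵐ x ∂μ i, x.2 ∈ (H i.1 i.2).support := by
    refine ae_iff.2 ?_
    have hset : {x : A × B | x.2 ∉ (H i.1 i.2).support} =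
        Set.univ ×ˢ (H i.1 i.2).supportᶜ := by
      ext x; simp
    rw [hset, Measure.prod_prod, (PMF.toMeasure_apply_eq_zero_iff _ _).2 disjoint_compl_right,
      mul_zero]
    exact (Set.to_countable _).measurableSet
  exact (measurePreserving_eval_infinitePi μ i).quasiMeasurePreserving.ae hi

variable (next : S → A → B → S)

theorem measurableSet_drivenState_eq (k : ℕ) :
    ∀ (n : ℕ) (s s' : S),
      MeasurableSet {ω : ℕ × S → A × B | drivenState next ω n s k = s'} := by
  induction k with
  | zero => exact fun _ s s' => MeasurableSet.const (s = s')
  | succ k ih =>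
    intro n s s'
    have : {ω : ℕ × S → A × B | drivenState next ω n s (k + 1) = s'} =
        ⋃ x : A × B, {ω | ω (n, s) ∈ ({x} : Set (A × B))} ∩
          {ω | drivenState next ω (n + 1) (next s x.1 x.2) k = s'} := by
      ext ω; simp [drivenState]
    rw [this]
    exact .iUnion fun x =>
      (measurable_pi_apply (X := fun _ => A × B) (n, s) (measurableSet_singleton x)).inter
        (ih _ _ _)

theorem measurable_drivenPlay [Countable S] (n : ℕ) (s : S) :
    Measurable fun ω : ℕ × S → A × B => drivenPlay next ω n s := by
  refine @measurable_pi_lambda _ ℕ (fun _ => S × A × B) MeasurableSpace.pi (fun _ => ⊤) _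
    fun k => ?_
  refine @measurable_to_countable' (S × A × B) _ ⊤ _ _ _ fun x => ?_
  have : (fun ω => drivenPlay next ω n s k) ⁻¹' {x} =
      {ω | drivenState next ω n s k = x.1} ∩
        {ω | ω (n + k, x.1) ∈ ({x.2} : Set (A × B))} := by
    ext ω
    simp only [drivenPlay, Set.mem_preimage, Set.mem_singleton_iff, Set.mem_inter_iff,
      Set.mem_ofPred_eq]
    constructor
    · rintro rfl; exact ⟨rfl, rfl⟩
    · rintro ⟨h1, h2⟩; rw [h1, h2]
  rw [this]
  exact (measurableSet_drivenState_eq next k n s x.1).inter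
    (measurable_pi_apply (X := fun _ => A × B) _ (measurableSet_singleton _))

noncomputable def markovMeasure (F : ℕ → S → PMF A) (H : ℕ → S → PMF B) (s0 : S) :
    Measure (Play S A B) :=
  (actionLaw F H).map fun ω => drivenPlay next ω 0 s0

variable {next} (G : ConcurrentGame S A B) (hG : ∀ s a b, G.trans s a b = PMF.pure (next s a b))
include hG

theorem actionLaw_drivenPlay_preimage_cylinder (F : ℕ → S → PMF A) (H : ℕ → S → PMF B)
    (l : List (S × A × B)) (s : S) :
    ∀ (n : ℕ) (s0 : S), actionLaw F H {ω | drivenPlay next ω n s0 ∈ cylinder l s} =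
      G.histProb (markovFun F n) (markovFun H n) s0 l s := by
  induction l with
  | nil =>
    intro n s0
    by_cases h : s = s0
    · simp [histProb, h, cylinder, drivenPlay, drivenState, actionLaw]
    · simp [histProb, h, cylinder, drivenPlay, drivenState, Ne.symm h]
  | cons x l ih =>
    obtain ⟨s', a, b⟩ := x
    intro n s0
    rw [histProb_cons_of_trans_eq_pure G hG, shiftF_markovFun, shiftF_markovFun,
      ← ih (n + 1) (next s0 a b)]
    simp only [drivenPlay_mem_cylinder_cons]
    split_ifs with hs
    · obtain ⟨I, t, hI, hIt⟩ :=
        exists_pi_eq_drivenPlay_preimage_cylinder (next := next) l s (n + 1) (next s0 a b)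
      have hset : {ω : ℕ × S → A × B | s' = s0 ∧ ω (n, s0) = (a, b) ∧
            drivenPlay next ω (n + 1) (next s0 a b) ∈ cylinder l s} =
          {ω | ω (n, s0) ∈ ({(a, b)} : Set (A × B))} ∩ (I : Set (ℕ × S)).pi t := by
        rw [← hIt]; ext ω; simp [hs]
      rw [hset, actionLaw, Measure.infinitePi_inter_pi _ (fun h => by have := hI _ h; omega)
        (measurableSet_singleton _) (fun i _ => (Set.to_countable _).measurableSet), ← hIt,
        ← Set.singleton_prod_singleton, Measure.prod_prod,
        PMF.toMeasure_apply_singleton _ _ (measurableSet_singleton _),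
        PMF.toMeasure_apply_singleton _ _ (measurableSet_singleton _)]
      simp [markovFun]
    · simp [hs]

theorem consistent_markovMeasure [Countable S] {F : ℕ → S → PMF A} {H : ℕ → S → PMF B}
    {σ : G.MaxStrategy} {π : G.MinStrategy}
    (hσ : σ.toFun = markovFun F 0) (hπ : π.toFun = markovFun H 0) (s0 : S) :
    Consistent G s0 σ π (markovMeasure next F H s0) := by
  refine ⟨?_, fun l s => ?_⟩
  · exact Measure.isProbabilityMeasure_map (measurable_drivenPlay next 0 s0).aemeasurable
  · rw [markovMeasure, Measure.map_apply (measurable_drivenPlay next 0 s0)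
      (measurableSet_cylinder l s), hσ, hπ]
    exact actionLaw_drivenPlay_preimage_cylinder G hG F H l s 0 s0

end MarkovMeasure

def badMatchNext : BMState → Bool → Bool → BMState
  | .d, true, true => .w
  | .d, true, false => .l
  | .d, false, true => .t
  | .d, false, false => .s
  | .w, _, _ => .w
  | .l, _, _ => .l
  | .s, _, _ => .d
  | .t, _, _ => .d

instance : Finite BMState :=
  Finite.of_surjective ![.d, .w, .l, .s, .t] fun x => by cases x <;> decide

theorem badMatch_trans (x : BMState) (a b : Bool) :
    badMatch.trans x a b = PMF.pure (badMatchNext x a b) := by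
  cases x <;> cases a <;> cases b <;> rfl

section Run

variable {st : ℕ → BMState} {a b : ℕ → Bool}
  (hrun : ∀ m, st (m + 1) = badMatchNext (st m) (a m) (b m))
include hrun

theorem badMatch_run_eq_l_of_le {m j : ℕ} (hm : st m = .l) (hmj : m ≤ j) : st j = .l := by
  induction j, hmj using Nat.le_induction with
  | base => exact hm
  | succ j _ ih => rw [hrun, ih]; rfl

theorem badMatch_run_ne_l (hB : ∀ n, ∃ m, n ≤ m ∧ st m ∈ ({.w, .s} : Set BMState))
    (m : ℕ) : st m ≠ .l := by
  intro hm
  obtain ⟨j, hj, hjT⟩ := hB m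
  rw [badMatch_run_eq_l_of_le hrun hm hj] at hjT
  simp at hjT

theorem badMatch_run_of_min_false {m : ℕ} (hd : st m = .d) (hb : b m = false)
    (hl : st (m + 1) ≠ .l) : a m = false ∧ st (m + 2) = .d := by
  rw [hrun, hd, hb] at hl
  cases ha : a m <;> rw [ha] at hl
  · rw [hrun, hrun, hd, hb, ha]; exact ⟨rfl, rfl⟩
  · exact absurd rfl hl

variable {N : ℕ} (hb : ∀ m, b m = decide (2 * N ≤ m)) (h0 : st 0 = .d)
  (hB : ∀ n, ∃ m, n ≤ m ∧ st m ∈ ({.w, .s} : Set BMState))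
include hb h0 hB

theorem badMatch_run_eq_d_of_le {k : ℕ} (hk : k ≤ N) : st (2 * k) = .d := by
  induction k with
  | zero => exact h0
  | succ k ih =>
    have hk' : k < N := hk
    exact (badMatch_run_of_min_false hrun (ih hk'.le) (by simp [hb]; omega)
      (badMatch_run_ne_l hrun hB _)).2

theorem badMatch_run_act_eq_false {k : ℕ} (hk : k < N) : a (2 * k) = false :=
  (badMatch_run_of_min_false hrun (badMatch_run_eq_d_of_le hrun hb h0 hB hk.le)
    (by simp [hb]; omega) (badMatch_run_ne_l hrun hB _)).1

theorem badMatch_run_exists_act_eq_true :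
    ∃ k, st (2 * (k + N)) = .d ∧ a (2 * (k + N)) = true := by
  by_contra! hfalse
  have hd : ∀ k, st (2 * (k + N)) = .d := by
    intro k
    induction k with
    | zero => simpa using badMatch_run_eq_d_of_le hrun hb h0 hB le_rfl
    | succ k ih =>
      have ha := Bool.eq_false_iff.2 (hfalse k ih)
      rw [show 2 * (k + 1 + N) = 2 * (k + N) + 1 + 1 by ring, hrun, hrun, ih, ha,
        hb (2 * (k + N)), decide_eq_true (by omega)]
      rfl
  obtain ⟨m, hm, hmT⟩ := hB (2 * N)
  obtain ⟨k, rfl | rfl⟩ : ∃ k, m = 2 * (k + N) ∨ m = 2 * (k + N) + 1 :=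
    ⟨(m - 2 * N) / 2, by omega⟩
  · rw [hd] at hmT; simp at hmT
  · have ha := Bool.eq_false_iff.2 (hfalse k (hd k))
    rw [hrun, hd, ha, hb, decide_eq_true (by omega)] at hmT
    simp [badMatchNext] at hmT

end Run

noncomputable def switchRule (N : ℕ) : ℕ → BMState → PMF Bool :=
  fun n _ => PMF.pure (decide (2 * N ≤ n))

noncomputable def switchStrategy (N : ℕ) : badMatch.MinStrategy where
  toFun := markovFun (switchRule N) 0
  mem_actB _ _ _ := Set.mem_univ _

theorem badMatch_drivenPlay_buchi {N : ℕ} {ω : ℕ × BMState → Bool × Bool}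
    (hω : ∀ i, (ω i).2 = decide (2 * N ≤ i.1))
    (hB : drivenPlay badMatchNext ω 0 .d ∈ buchi {.w, .s}) :
    (∀ k < N, (ω (2 * k, .d)).1 = false) ∧ ∃ k, (ω (2 * (k + N), .d)).1 = true := by
  set x := drivenPlay badMatchNext ω 0 .d
  have hrun : ∀ m, (x (m + 1)).1 = badMatchNext (x m).1 (x m).2.1 (x m).2.2 :=
    drivenPlay_succ_fst ω 0 .d
  have hb : ∀ m, (x m).2.2 = decide (2 * N ≤ m) := fun m => by
    simp only [x, drivenPlay, hω, Nat.zero_add]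
  have hact : ∀ m, (x m).1 = .d → (x m).2.1 = (ω (m, .d)).1 := fun m hm => by
    simp only [x, drivenPlay, Nat.zero_add] at hm ⊢
    rw [hm]
  refine ⟨fun k hk => ?_, ?_⟩
  · rw [← hact _ (badMatch_run_eq_d_of_le hrun hb rfl hB hk.le)]
    exact badMatch_run_act_eq_false hrun hb rfl hB hk
  · obtain ⟨k, hd, ha⟩ := badMatch_run_exists_act_eq_true hrun hb rfl hB
    exact ⟨k, hact _ hd ▸ ha⟩

variable (F : ℕ → BMState → PMF Bool) (N : ℕ)

theorem ae_actionLaw_switchRule_snd_eq :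
    ∀ᵐ ω ∂actionLaw F (switchRule N), ∀ i, (ω i).2 = decide (2 * N ≤ i.1) := by
  filter_upwards [ae_actionLaw_snd_mem_support F (switchRule N)] with ω hω i
  simpa [switchRule] using hω i

theorem markovMeasure_badMatch_buchi_le_prod :
    markovMeasure badMatchNext F (switchRule N) .d (buchi {.w, .s}) ≤
      ∏ k ∈ Finset.range N, (1 - F (2 * k) .d true) := by
  set I := (Finset.range N).image fun k => (2 * k, BMState.d)
  have hbox :
      actionLaw F (switchRule N) ((I : Set (ℕ × BMState)).pi fun _ => {false} ×ˢ .univ) =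
        ∏ k ∈ Finset.range N, (1 - F (2 * k) .d true) := by
    rw [actionLaw, Measure.infinitePi_pi _ fun _ _ => (Set.to_countable _).measurableSet,
      Finset.prod_image fun k _ k' _ h => by simpa using h]
    refine Finset.prod_congr rfl fun k _ => ?_
    rw [Measure.prod_prod, measure_univ, mul_one,
      PMF.toMeasure_apply_singleton _ _ (measurableSet_singleton _), PMF.apply_false_eq_one_sub]
  rw [markovMeasure, Measure.map_apply (measurable_drivenPlay _ 0 _) (measurableSet_buchi _),
    ← hbox]
  refine measure_mono_ae ?_
  filter_upwards [ae_actionLaw_switchRule_snd_eq F N] with ω hω hB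
  change ω ∈ (I : Set (ℕ × BMState)).pi _
  simp only [I, Finset.coe_image, Set.mem_pi, Set.forall_mem_image, Finset.mem_coe,
    Finset.mem_range, Set.mem_prod, Set.mem_singleton_iff, Set.mem_univ, and_true]
  exact (badMatch_drivenPlay_buchi hω hB).1

theorem markovMeasure_badMatch_buchi_le_tsum :
    markovMeasure badMatchNext F (switchRule N) .d (buchi {.w, .s}) ≤
      ∑' k, F (2 * (k + N)) .d true := by
  have hcoord : ∀ k, actionLaw F (switchRule N)
      (Function.eval (2 * (k + N), .d) ⁻¹' ({true} ×ˢ .univ)) = F (2 * (k + N)) .d true := by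
    intro k
    rw [actionLaw, (measurePreserving_eval_infinitePi _ _).measure_preimage
        (Set.to_countable _).measurableSet.nullMeasurableSet, Measure.prod_prod, measure_univ,
      mul_one, PMF.toMeasure_apply_singleton _ _ (measurableSet_singleton _)]
  rw [markovMeasure, Measure.map_apply (measurable_drivenPlay _ 0 _) (measurableSet_buchi _)]
  refine (measure_mono_ae ?_).trans ((measure_iUnion_le _).trans_eq (tsum_congr hcoord))
  filter_upwards [ae_actionLaw_switchRule_snd_eq F N] with ω hω hB
  obtain ⟨k, hk⟩ := (badMatch_drivenPlay_buchi hω hB).2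
  exact Set.mem_iUnion.2 ⟨k, by simpa using hk⟩

/-- **The Bad Match: Markov strategies are worthless.**
For every Markov Max strategy (the chosen mixed action depends only on the current
state and the number of elapsed steps), the infimum over Min strategies of the
probability of the Büchi objective `buchi {w, s}` from `d` is `0`. -/
theorem badMatch_markov_worthless (σ : badMatch.MaxStrategy) (hσ : σ.IsMarkov) :
    (⨅ π : badMatch.MinStrategy,
      ⨅ P : {P : Measure (Play BMState Bool Bool) //
          Consistent badMatch BMState.d σ π P},
        P.1 (buchi {BMState.w, BMState.s})) = 0 := by
  set F : ℕ → BMState → PMF Bool := fun n x => σ.toFun (List.replicate n (.d, true, true), x)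
  have hF : σ.toFun = markovFun F 0 := hσ.toFun_eq _
  refine nonpos_iff_eq_zero.1 (le_trans (le_iInf fun N => ?_)
    (ENNReal.iInf_min_prod_one_sub_tsum_add_eq_zero fun k => (F (2 * k) .d).coe_le_one true).le)
  have hP := consistent_markovMeasure badMatch badMatch_trans hF
    (H := switchRule N) (π := switchStrategy N) rfl .d
  exact iInf_le_of_le (switchStrategy N) <| iInf_le_of_le ⟨_, hP⟩ <|
    le_min (markovMeasure_badMatch_buchi_le_prod F N) (markovMeasure_badMatch_buchi_le_tsum F N)

end ConcurrentGame
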